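/- Let P, Q be binary-input DMCs with finite output alphabets whose conditional output distributions P_0, P_1 and Q_0, Q_1 each have a common support point, have non-constant Chernoff divergence functions, and let p_min be the smallest nonzero transition probability among P and Q. Let E* = max_{0≤s≤1} E_s and let s* ∈ (0,1/2] be a maximizer of E_s satisfying d_C(P_0,P_1,s*) ≥ d_C(P_0,P_1,1−s*), d_C(Q_0,Q_1,s*) ≥ d_C(Q_0,Q_1,1−s*), and E* = min(d_C(P_0,P_1,s*), d_C(Q_0,Q_1,s*)). Fix a deterministic n-step 2-hop protocol with codewords x⃗_0, x⃗_1 and decoding regions D_0, D_1, let w⃗_1(∅) ∈ {0,1}^n minimize Q^n(D_0 | ·), and let w⃗_1^c(∅) be its bit-wise complement. If −log(p_{e,0} + p_{e,1}) > nE* + √(2n)·log(1/p_min) + log 4, then there exists t ∈ {s*, 1−s*} such that d_C'(x⃗_0, x⃗_1, P^n, t) and d_C'(w⃗_1^c(∅), w⃗_1(∅), Q^n, t) have strictly opposite signs, and max(d_C(P_0,P_1,t), d_C(P_0,P_1,1−t)) = max(d_C(Q_0,Q_1,t), d_C(Q_0,Q_1,1−t)) = E*. -/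

import Mathlib

open scoped BigOperators
open Finset

noncomputable section

/-- A probability mass function on a finite type, given as a real-valued function. -/
def IsPMF {α : Type*} [Fintype α] (p : α → ℝ) : Prop :=
  (∀ x, 0 ≤ p x) ∧ ∑ x, p x = 1

/-- A discrete memoryless channel: every input symbol yields a PMF on outputs. -/
def IsChannel {X Y : Type*} [Fintype Y] (P : X → Y → ℝ) : Prop :=
  ∀ x, IsPMF (P x)

/-- The Chernoff sum `Σ_x p(x)^{1-s} q(x)^s`, with terms where `p` or `q` vanish removed;
this realizes the continuous extension to the endpoints `s ∈ {0,1}`. -/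
def cherSum {α : Type*} [Fintype α] (p q : α → ℝ) (s : ℝ) : ℝ :=
  ∑ x, if p x = 0 ∨ q x = 0 then 0 else p x ^ (1 - s) * q x ^ s

/-- The Chernoff divergence `d_C(p, q, s)`. -/
def dC {α : Type*} [Fintype α] (p q : α → ℝ) (s : ℝ) : ℝ :=
  - Real.log (cherSum p q s)

/-- First derivative of the Chernoff divergence with respect to `s`. -/
def dC' {α : Type*} [Fintype α] (p q : α → ℝ) (s : ℝ) : ℝ :=
  deriv (dC p q) s

/-- Second derivative of the Chernoff divergence with respect to `s`. -/
def dC'' {α : Type*} [Fintype α] (p q : α → ℝ) (s : ℝ) : ℝ :=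
  deriv (deriv (dC p q)) s

/-- The tilted distribution `Q_s`. -/
def tilted {α : Type*} [Fintype α] (p q : α → ℝ) (s : ℝ) (x : α) : ℝ :=
  (if p x = 0 ∨ q x = 0 then 0 else p x ^ (1 - s) * q x ^ s) / cherSum p q s

/-- Kullback–Leibler divergence (natural log), with the convention `0 log 0 = 0`. -/
def KLdiv {α : Type*} [Fintype α] (p q : α → ℝ) : ℝ :=
  ∑ x, if p x = 0 then 0 else p x * Real.log (p x / q x)

/-- Product (memoryless) output distribution of a channel given an input string. -/
def prodDist {X Y : Type*} [Fintype Y] {n : ℕ} (P : X → Y → ℝ) (w : Fin n → X) :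
    (Fin n → Y) → ℝ :=
  fun y => ∏ i, P (w i) (y i)

/-- Two distributions have a common support point. -/
def CommonSupport {α : Type*} (p q : α → ℝ) : Prop :=
  ∃ x, p x ≠ 0 ∧ q x ≠ 0

/-- `pmin` is the smallest nonzero transition probability of the channel `Q`. -/
def MinTransChan {X Y : Type*} (Q : X → Y → ℝ) (pmin : ℝ) : Prop :=
  0 < pmin ∧ (∃ x y, Q x y = pmin) ∧ ∀ x y, Q x y ≠ 0 → pmin ≤ Q x y

/-- `pmin` is the smallest nonzero transition probability among the channels `P` and `Q`. -/
def MinTransPair {Y Z : Type*} (P : Bool → Y → ℝ) (Q : Bool → Z → ℝ) (pmin : ℝ) : Prop :=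
  0 < pmin ∧ ((∃ b y, P b y = pmin) ∨ (∃ b z, Q b z = pmin)) ∧
    (∀ b y, P b y ≠ 0 → pmin ≤ P b y) ∧ ∀ b z, Q b z ≠ 0 → pmin ≤ Q b z

/-- `pmin` is the smallest nonzero probability among the values of two distributions. -/
def MinProbPair {α : Type*} (p q : α → ℝ) (pmin : ℝ) : Prop :=
  0 < pmin ∧ ((∃ x, p x = pmin) ∨ (∃ x, q x = pmin)) ∧
    (∀ x, p x ≠ 0 → pmin ≤ p x) ∧ ∀ x, q x ≠ 0 → pmin ≤ q x

/-- A deterministic `n`-step 2-hop protocol: codewords `x false = x⃗₀`, `x true = x⃗₁`,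
relay maps (the `i`-th transmission may depend only on the previously received symbols),
and a decoder. -/
structure DetProtocol (Y Z : Type*) (n : ℕ) where
  x : Bool → Fin n → Bool
  relay : (i : Fin n) → (Fin i → Y) → Bool
  dec : (Fin n → Z) → Bool

/-- The relay transmissions `W_1, …, W_n` determined by the received sequence `y`. -/
def DetProtocol.W {Y Z : Type*} {n : ℕ} (π : DetProtocol Y Z n) (y : Fin n → Y)
    (i : Fin n) : Bool :=
  π.relay i (fun j => y (Fin.castLE i.isLt.le j))

/-- `errProb P Q π b` is the conditional error probability `ℙ(Θ̂ = ¬b ∣ Θ = b)`. -/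
def errProb {Y Z : Type*} [Fintype Y] [Fintype Z] {n : ℕ}
    (P : Bool → Y → ℝ) (Q : Bool → Z → ℝ) (π : DetProtocol Y Z n) (b : Bool) : ℝ :=
  ∑ y : Fin n → Y, ∑ z : Fin n → Z,
    prodDist P (π.x b) y * prodDist Q (π.W y) z *
      (if π.dec z = !b then 1 else 0)

/-- Probability (given `Θ = b`) that the relay receives the prefix `ypre` in the
first `k` time steps. -/
def prefixProb {Y Z : Type*} [Fintype Y] {n : ℕ} (P : Bool → Y → ℝ)
    (π : DetProtocol Y Z n) (b : Bool) {k : ℕ} (hk : k ≤ n) (ypre : Fin k → Y) : ℝ :=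
  ∏ i : Fin k, P (π.x b (Fin.castLE hk i)) (ypre i)

/-- `errGiven P Q π b hk ypre` is the conditional error probability `p_{e,b}(y_{1…k})`:
the probability that `Θ̂ = ¬b` given `Θ = b` and that the relay receives `ypre` in the
first `k` time steps. -/
def errGiven {Y Z : Type*} [Fintype Y] [Fintype Z] {n : ℕ}
    (P : Bool → Y → ℝ) (Q : Bool → Z → ℝ) (π : DetProtocol Y Z n) (b : Bool)
    {k : ℕ} (hk : k ≤ n) (ypre : Fin k → Y) : ℝ :=
  (∑ y : Fin n → Y, ∑ z : Fin n → Z,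
      Set.indicator {y' : Fin n → Y | ∀ i : Fin k, y' (Fin.castLE hk i) = ypre i}
          (fun _ => (1 : ℝ)) y *
        prodDist P (π.x b) y * prodDist Q (π.W y) z *
        (if π.dec z = !b then 1 else 0)) /
    prefixProb P π b hk ypre

/-- The first `k` relay transmissions `w⃗(y_{1…k})`, determined by the first `k`
received symbols. -/
def relayPrefix {Y Z : Type*} {n : ℕ} (π : DetProtocol Y Z n) {k : ℕ} (hk : k ≤ n)
    (ypre : Fin k → Y) (i : Fin k) : Bool :=
  π.relay (Fin.castLE hk i) (fun j => ypre (Fin.castLE i.isLt.le j))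

/-- Probability that the decoder outputs `b` when the relay input string is `w`. -/
def decProb {Z : Type*} [Fintype Z] {n : ℕ} (Q : Bool → Z → ℝ)
    (dec : (Fin n → Z) → Bool) (b : Bool) (w : Fin n → Bool) : ℝ :=
  ∑ z : Fin n → Z, prodDist Q w z * (if dec z = b then 1 else 0)

/-- `w` extends the relay's first `k` transmissions (after receiving `ypre`) to length `n`,
minimizing the probability that the decoder outputs `b`, i.e. `w = w⃗_{1-b}(y_{1…k})`. -/
def IsBestExtension {Y Z : Type*} [Fintype Z] {n : ℕ} (Q : Bool → Z → ℝ)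
    (π : DetProtocol Y Z n) (b : Bool) {k : ℕ} (hk : k ≤ n) (ypre : Fin k → Y)
    (w : Fin n → Bool) : Prop :=
  (∀ i : Fin k, w (Fin.castLE hk i) = relayPrefix π hk ypre i) ∧
    ∀ w' : Fin n → Bool,
      (∀ i : Fin k, w' (Fin.castLE hk i) = relayPrefix π hk ypre i) →
        decProb Q π.dec b w ≤ decProb Q π.dec b w'

/-- A randomized `n`-step 2-hop protocol: a finite collection of deterministic
protocols together with a probability distribution (the shared private randomness). -/
structure RandProtocol (Y Z : Type*) (n : ℕ) where
  m : ℕ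
  ρ : Fin m → ℝ
  det : Fin m → DetProtocol Y Z n

/-- Validity of the randomness distribution of a randomized protocol. -/
def RandProtocol.Valid {Y Z : Type*} {n : ℕ} (π : RandProtocol Y Z n) : Prop :=
  (∀ r, 0 ≤ π.ρ r) ∧ ∑ r, π.ρ r = 1

/-- Overall error probability `ℙ(Θ̂ ≠ Θ)` of a randomized protocol, with `Θ` uniform. -/
def randPe {Y Z : Type*} [Fintype Y] [Fintype Z] {n : ℕ}
    (P : Bool → Y → ℝ) (Q : Bool → Z → ℝ) (π : RandProtocol Y Z n) : ℝ :=
  ∑ r, π.ρ r * ((errProb P Q (π.det r) false + errProb P Q (π.det r) true) / 2)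

/-- The 2-hop error exponent `E(P,Q)`: the supremum, over sequences of (randomized)
protocols, of the liminf of `-(1/n) log P_e(n,P,Q)`. -/
def twoHopExponent {Y Z : Type*} [Fintype Y] [Fintype Z]
    (P : Bool → Y → ℝ) (Q : Bool → Z → ℝ) : ℝ :=
  sSup { E | ∃ π : (n : ℕ) → RandProtocol Y Z n, (∀ n, (π n).Valid) ∧
    E = Filter.liminf (fun n : ℕ => -(1 / (n : ℝ)) * Real.log (randPe P Q (π n)))
          Filter.atTop }

/-- `m` is the unique global maximizer of `g` on `[0,1]`. -/
def UniqueArgmax (g : ℝ → ℝ) (m : ℝ) : Prop :=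
  m ∈ Set.Icc (0 : ℝ) 1 ∧ ∀ s ∈ Set.Icc (0 : ℝ) 1, s ≠ m → g s < g m

/-- `g` is skewed with respect to `s*`. -/
def SkewedFun (sStar : ℝ) (g : ℝ → ℝ) : Prop :=
  ∃ m, UniqueArgmax g m ∧ (m < sStar ∨ 1 - sStar < m)

/-- `g` is balanced with respect to `s*`. -/
def BalancedFun (sStar : ℝ) (g : ℝ → ℝ) : Prop :=
  ∃ m, UniqueArgmax g m ∧ sStar < m ∧ m < 1 - sStar

/-- `g` is neutral with respect to `s*`. -/
def NeutralFun (sStar : ℝ) (g : ℝ → ℝ) : Prop :=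
  ∃ m, UniqueArgmax g m ∧ (m = sStar ∨ m = 1 - sStar)

/-- `g` and `h` are of strictly opposite type w.r.t. `s*`. -/
def StrictlyOppositeType (sStar : ℝ) (g h : ℝ → ℝ) : Prop :=
  (SkewedFun sStar g ∧ BalancedFun sStar h) ∨ (BalancedFun sStar g ∧ SkewedFun sStar h)

/-- `g` and `h` are of weakly opposite type w.r.t. `s*`. -/
def WeaklyOppositeType (sStar : ℝ) (g h : ℝ → ℝ) : Prop :=
  ((SkewedFun sStar g ∨ NeutralFun sStar g) ∧ (BalancedFun sStar h ∨ NeutralFun sStar h)) ∨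
    ((BalancedFun sStar g ∨ NeutralFun sStar g) ∧ (SkewedFun sStar h ∨ NeutralFun sStar h))

/-- `g` is non-constant on `[0,1]`. -/
def NonConstantOn (g : ℝ → ℝ) : Prop :=
  ∃ s₁ ∈ Set.Icc (0 : ℝ) 1, ∃ s₂ ∈ Set.Icc (0 : ℝ) 1, g s₁ ≠ g s₂

/-- The quantity `E_s` from the paper. -/
def Efun {Y Z : Type*} [Fintype Y] [Fintype Z]
    (P : Bool → Y → ℝ) (Q : Bool → Z → ℝ) (s : ℝ) : ℝ :=
  min (max (dC (P false) (P true) s) (dC (P false) (P true) (1 - s)))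
      (max (dC (Q false) (Q true) s) (dC (Q false) (Q true) (1 - s)))

/-!
Both hops are bounded below by a Chernoff estimate for product distributions `p`, `q`: at a
maximiser `s₀` of `dC p q` on `[0, 1]`, changing measure to the tilted distribution and applying
Chebyshev's inequality to the log-likelihood ratio, whose per-letter values are bounded by
`log (1 / pmin)`, gives `∑ min p q ≥ exp (-dC p q s₀ - √(2n) log (1 / pmin)) / 4`. The error
probability dominates this overlap for the two codewords of the first hop and, since the relay
cannot do better than the decoder's best input words, for `w⃗₁(∅)` and a minimiser of
`Q^n(D₁ | ·)` on the second hop. So the hypothesis on `p_e` forces `F = d_C(x⃗₀, x⃗₁, P^n, ·)` and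
`G = d_C(w⃗₁^c(∅), w⃗₁(∅), Q^n, ·)` to exceed `n E*` somewhere in `[0, 1]`, whereas letterwise
`F(s) ≤ n max (d_C(P₀, P₁, s), d_C(P₀, P₁, 1 - s))` and likewise for `G`.

Maximality of `s*` and concavity of the single-letter divergences then force
`d_C(P₀, P₁, s*) = d_C(Q₀, Q₁, s*) = E*` and place the points where `F` and `G` exceed `n E*` on
opposite sides of `s*` or of `1 - s*`; by concavity of `F` and `G` their derivatives have opposite
signs there.
-/

open Set

section Chernoff

open Real

variable {α : Type*} {p q : α → ℝ} {s : ℝ}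

def cherTerm (p q : α → ℝ) (s : ℝ) (x : α) : ℝ :=
  if p x = 0 ∨ q x = 0 then 0 else p x ^ (1 - s) * q x ^ s

theorem cherTerm_of_eq_zero {x : α} (h : p x = 0 ∨ q x = 0) (s : ℝ) : cherTerm p q s x = 0 :=
  if_pos h

theorem cherTerm_eq_exp (hp : ∀ x, 0 ≤ p x) (hq : ∀ x, 0 ≤ q x) {x : α} (hpx : p x ≠ 0)
    (hqx : q x ≠ 0) (s : ℝ) :
    cherTerm p q s x = exp ((1 - s) * log (p x) + s * log (q x)) := by
  rw [cherTerm, if_neg (by tauto), rpow_def_of_pos ((hp x).lt_of_ne' hpx),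
    rpow_def_of_pos ((hq x).lt_of_ne' hqx), ← exp_add]
  ring_nf

theorem cherTerm_pos (hp : ∀ x, 0 ≤ p x) (hq : ∀ x, 0 ≤ q x) {x : α} (hpx : p x ≠ 0)
    (hqx : q x ≠ 0) (s : ℝ) : 0 < cherTerm p q s x := by
  rw [cherTerm_eq_exp hp hq hpx hqx]
  exact exp_pos _

theorem cherTerm_nonneg (hp : ∀ x, 0 ≤ p x) (hq : ∀ x, 0 ≤ q x) (s : ℝ) (x : α) :
    0 ≤ cherTerm p q s x := by
  by_cases h : p x = 0 ∨ q x = 0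
  · rw [cherTerm_of_eq_zero h]
  · push Not at h
    exact (cherTerm_pos hp hq h.1 h.2 s).le

theorem hasDerivAt_cherTerm (hp : ∀ x, 0 ≤ p x) (hq : ∀ x, 0 ≤ q x) (x : α) (s : ℝ) :
    HasDerivAt (fun s => cherTerm p q s x)
      (cherTerm p q s x * (log (q x) - log (p x))) s := by
  by_cases h : p x = 0 ∨ q x = 0
  · simp only [cherTerm_of_eq_zero h, zero_mul]
    exact hasDerivAt_const s 0
  · push Not at h
    simp only [cherTerm_eq_exp hp hq h.1 h.2]
    refine HasDerivAt.exp ?_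
    have := ((hasDerivAt_id s).const_sub 1).mul_const (log (p x)) |>.add
      ((hasDerivAt_id s).mul_const (log (q x)))
    exact this.congr_deriv (by ring)

theorem cherTerm_add (hp : ∀ x, 0 ≤ p x) (hq : ∀ x, 0 ≤ q x) {a b : ℝ} (ha : 0 < a) (hb : 0 < b)
    (hab : a + b = 1) (u v : ℝ) (x : α) :
    cherTerm p q (a * u + b * v) x = cherTerm p q u x ^ a * cherTerm p q v x ^ b := by
  by_cases h : p x = 0 ∨ q x = 0
  · simp only [cherTerm_of_eq_zero h, zero_rpow ha.ne', zero_rpow hb.ne', mul_zero]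
  · push Not at h
    simp only [cherTerm_eq_exp hp hq h.1 h.2, ← exp_mul, ← exp_add]
    congr 1
    linear_combination (-log (p x)) * hab

variable [Fintype α]

theorem cherSum_eq_sum_cherTerm (p q : α → ℝ) (s : ℝ) :
    cherSum p q s = ∑ x, cherTerm p q s x := rfl

theorem cherSum_pos (hp : ∀ x, 0 ≤ p x) (hq : ∀ x, 0 ≤ q x) (hsupp : CommonSupport p q)
    (s : ℝ) : 0 < cherSum p q s := by
  obtain ⟨x, hpx, hqx⟩ := hsupp
  exact Finset.sum_pos' (fun x _ => cherTerm_nonneg hp hq s x)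
    ⟨x, Finset.mem_univ x, cherTerm_pos hp hq hpx hqx s⟩

theorem cherSum_le_one (hp : IsPMF p) (hq : IsPMF q) (hs : s ∈ Icc (0 : ℝ) 1) :
    cherSum p q s ≤ 1 := by
  calc cherSum p q s ≤ ∑ x, ((1 - s) * p x + s * q x) := by
        refine Finset.sum_le_sum fun x _ => ?_
        split
        · exact add_nonneg (mul_nonneg (by linarith [hs.2]) (hp.1 x)) (mul_nonneg hs.1 (hq.1 x))
        · exact geom_mean_le_arith_mean2_weighted (by linarith [hs.2]) hs.1 (hp.1 x) (hq.1 x)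
            (by ring)
    _ = 1 := by rw [Finset.sum_add_distrib, ← Finset.mul_sum, ← Finset.mul_sum, hp.2, hq.2]; ring

theorem dC_nonneg (hp : IsPMF p) (hq : IsPMF q) (hsupp : CommonSupport p q)
    (hs : s ∈ Icc (0 : ℝ) 1) : 0 ≤ dC p q s :=
  neg_nonneg.mpr (log_nonpos (cherSum_pos hp.1 hq.1 hsupp s).le (cherSum_le_one hp hq hs))

theorem dC_swap (p q : α → ℝ) (s : ℝ) : dC q p s = dC p q (1 - s) := by
  unfold dC cherSum
  congr 2
  refine Finset.sum_congr rfl fun x _ => ?_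
  simp only [sub_sub_cancel, or_comm, mul_comm]

theorem dC_self (hp : IsPMF p) (s : ℝ) : dC p p s = 0 := by
  have hsum : cherSum p p s = 1 := by
    rw [← hp.2]
    refine Finset.sum_congr rfl fun x _ => ?_
    by_cases h : p x = 0
    · simp [h]
    · rw [if_neg (by tauto), ← rpow_add ((hp.1 x).lt_of_ne' h)]
      simp
  rw [dC, hsum, log_one, neg_zero]

theorem hasDerivAt_dC (hp : ∀ x, 0 ≤ p x) (hq : ∀ x, 0 ≤ q x) (hsupp : CommonSupport p q)
    (s : ℝ) :
    HasDerivAt (dC p q) (∑ x, tilted p q s x * (log (p x) - log (q x))) s := by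
  have hsum : HasDerivAt (cherSum p q) (∑ x, cherTerm p q s x * (log (q x) - log (p x))) s :=
    HasDerivAt.fun_sum fun x _ => hasDerivAt_cherTerm hp hq x s
  refine (hsum.log (cherSum_pos hp hq hsupp s).ne').neg.congr_deriv ?_
  rw [← neg_div, ← Finset.sum_neg_distrib, Finset.sum_div]
  refine Finset.sum_congr rfl fun x _ => ?_
  rw [tilted, div_mul_eq_mul_div]
  congr 1
  rw [cherTerm]
  ring

theorem differentiable_dC (hp : ∀ x, 0 ≤ p x) (hq : ∀ x, 0 ≤ q x) (hsupp : CommonSupport p q) :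
    Differentiable ℝ (dC p q) :=
  fun s => (hasDerivAt_dC hp hq hsupp s).differentiableAt

/-- By Hölder's inequality with exponents `1/a, 1/b`, `cherSum` is log-convex. -/
theorem concaveOn_dC (hp : ∀ x, 0 ≤ p x) (hq : ∀ x, 0 ≤ q x) (hsupp : CommonSupport p q) :
    ConcaveOn ℝ univ (dC p q) := by
  refine ⟨convex_univ, fun u _ v _ a b ha hb hab => ?_⟩
  rcases ha.eq_or_lt with rfl | ha
  · simp [(zero_add b).symm.trans hab]
  rcases hb.eq_or_lt with rfl | hb
  · simp [(add_zero a).symm.trans hab]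
  have hu := cherSum_pos hp hq hsupp u
  have hv := cherSum_pos hp hq hsupp v
  have hholder : cherSum p q (a * u + b * v) ≤ cherSum p q u ^ a * cherSum p q v ^ b := by
    have := inner_le_Lp_mul_Lq_of_nonneg Finset.univ (holderConjugate_one_div ha hb hab)
      (f := fun x => cherTerm p q u x ^ a) (g := fun x => cherTerm p q v x ^ b)
      (fun x _ => rpow_nonneg (cherTerm_nonneg hp hq u x) _)
      (fun x _ => rpow_nonneg (cherTerm_nonneg hp hq v x) _)
    simp only [← rpow_mul (cherTerm_nonneg hp hq _ _), one_div,
      mul_inv_cancel₀ ha.ne', mul_inv_cancel₀ hb.ne', rpow_one, inv_inv] at this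
    simpa only [cherSum_eq_sum_cherTerm, cherTerm_add hp hq ha hb hab] using this
  have hlog := log_le_log (cherSum_pos hp hq hsupp _) hholder
  rw [log_mul (rpow_pos_of_pos hu a).ne' (rpow_pos_of_pos hv b).ne', log_rpow hu,
    log_rpow hv] at hlog
  simp only [dC, smul_eq_mul]
  linarith

end Chernoff

section ChernoffBound

open Real

theorem IsMaxOn.mul_sub_nonpos_of_hasDerivAt {f : ℝ → ℝ} {S : Set ℝ} {x y d : ℝ}
    (hmax : IsMaxOn f S x) (hS : Convex ℝ S) (hx : x ∈ S) (hy : y ∈ S) (hd : HasDerivAt f d x) :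
    d * (y - x) ≤ 0 := by
  have := hmax.localize.hasFDerivWithinAt_nonpos hd.hasDerivWithinAt.hasFDerivWithinAt
    (sub_mem_posTangentConeAt_of_segment_subset (hS.segment_subset hx hy))
  simpa [mul_comm] using this

theorem one_half_le_sum_filter_abs_le {α : Type*} [Fintype α] {w f : α → ℝ} (hw : IsPMF w) {r : ℝ}
    (hr : 0 < r) (hvar : ∑ x, w x * f x ^ 2 ≤ r ^ 2 / 2) :
    1 / 2 ≤ ∑ x ∈ Finset.univ.filter (fun x => |f x| ≤ r), w x := by
  have htail : (∑ x ∈ Finset.univ.filter (fun x => ¬ |f x| ≤ r), w x) * r ^ 2 ≤ r ^ 2 / 2 := by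
    refine le_trans ?_ hvar
    rw [Finset.sum_mul, Finset.sum_filter]
    refine Finset.sum_le_sum fun x _ => ?_
    split_ifs with h
    · exact mul_nonneg (hw.1 x) (sq_nonneg _)
    · rw [not_le] at h
      exact mul_le_mul_of_nonneg_left (by nlinarith [abs_nonneg (f x), sq_abs (f x)]) (hw.1 x)
  have hsplit := Finset.sum_filter_add_sum_filter_not Finset.univ (fun x => |f x| ≤ r) w
  rw [hw.2] at hsplit
  have := le_of_mul_le_mul_right (htail.trans_eq (one_div_mul_eq_div _ _).symm) (pow_pos hr 2)
  linarith

theorem sum_mul_sub_mean_sq_le {α : Type*} [Fintype α] {w f : α → ℝ} (hw : IsPMF w) {L : ℝ}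
    (hf : ∀ x, w x ≠ 0 → |f x| ≤ L) :
    ∑ x, w x * (f x - ∑ x', w x' * f x') ^ 2 ≤ L ^ 2 := by
  set m := ∑ x', w x' * f x'
  have hvar : ∑ x, w x * (f x - m) ^ 2 = ∑ x, w x * f x ^ 2 - m ^ 2 := by
    calc ∑ x, w x * (f x - m) ^ 2 = ∑ x, (w x * f x ^ 2 - 2 * m * (w x * f x) + m ^ 2 * w x) :=
          Finset.sum_congr rfl fun x _ => by ring
      _ = ∑ x, w x * f x ^ 2 - 2 * m * m + m ^ 2 * 1 := by
          rw [Finset.sum_add_distrib, Finset.sum_sub_distrib, ← Finset.mul_sum, ← Finset.mul_sum,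
            hw.2]
      _ = ∑ x, w x * f x ^ 2 - m ^ 2 := by ring
  have hmoment : ∑ x, w x * f x ^ 2 ≤ ∑ x, w x * L ^ 2 := by
    refine Finset.sum_le_sum fun x _ => ?_
    by_cases hx : w x = 0
    · simp [hx]
    · exact mul_le_mul_of_nonneg_left (sq_le_sq' (abs_le.mp (hf x hx)).1 (abs_le.mp (hf x hx)).2)
        (hw.1 x)
  rw [← Finset.sum_mul, hw.2, one_mul] at hmoment
  nlinarith [sq_nonneg m]

variable {α : Type*} {p q : α → ℝ} {s : ℝ}

/-- For `ℓ = log p - log q` one has `p = cherTerm · exp (s ℓ)` and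
`q = cherTerm · exp (-(1 - s) ℓ)`, and the sign conditions on `m` make both exponents at least
`-r`. -/
theorem cherTerm_mul_exp_neg_le_min (hp : ∀ x, 0 ≤ p x) (hq : ∀ x, 0 ≤ q x) {x : α}
    (hs : s ∈ Icc (0 : ℝ) 1) {m r : ℝ} (hm₀ : 0 ≤ s * m) (hm₁ : (1 - s) * m ≤ 0)
    (hx : |log (p x) - log (q x) - m| ≤ r) :
    cherTerm p q s x * exp (-r) ≤ min (p x) (q x) := by
  by_cases h : p x = 0 ∨ q x = 0
  · rw [cherTerm_of_eq_zero h, zero_mul]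
    exact le_min (hp x) (hq x)
  push Not at h
  obtain ⟨hlo, hhi⟩ := abs_le.mp hx
  have hlo' := mul_le_mul_of_nonneg_left hlo hs.1
  have hhi' := mul_le_mul_of_nonneg_left hhi (sub_nonneg.mpr hs.2)
  have hr : 0 ≤ r := (abs_nonneg _).trans hx
  rw [cherTerm_eq_exp hp hq h.1 h.2, ← exp_add]
  refine le_min ?_ ?_
  · calc _ ≤ exp (log (p x)) := exp_le_exp.mpr (by nlinarith [hs.2])
      _ = p x := exp_log ((hp x).lt_of_ne' h.1)
  · calc _ ≤ exp (log (q x)) := exp_le_exp.mpr (by nlinarith [hs.1])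
      _ = q x := exp_log ((hq x).lt_of_ne' h.2)

variable [Fintype α]

theorem ne_zero_of_tilted_ne_zero {x : α} (h : tilted p q s x ≠ 0) : p x ≠ 0 ∧ q x ≠ 0 := by
  by_contra hpq
  exact h (by rw [tilted, ← cherTerm, cherTerm_of_eq_zero (by tauto), zero_div])

theorem isPMF_tilted (hp : ∀ x, 0 ≤ p x) (hq : ∀ x, 0 ≤ q x) (hsupp : CommonSupport p q)
    (s : ℝ) : IsPMF (tilted p q s) :=
  ⟨fun x => div_nonneg (cherTerm_nonneg hp hq s x) (cherSum_pos hp hq hsupp s).le, by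
    simp only [tilted, ← Finset.sum_div]
    exact div_self (cherSum_pos hp hq hsupp s).ne'⟩

/-- Change of measure to the tilted distribution at `s₀`: by Chebyshev it puts mass at least `1/2`
on the window where the log-likelihood ratio is within `r` of its mean `dC' p q s₀`, and the sign
of `dC'` at a maximiser on `[0,1]` is exactly what `cherTerm_mul_exp_neg_le_min` needs. -/
theorem half_exp_neg_dC_sub_le_sum_min (hp : ∀ x, 0 ≤ p x) (hq : ∀ x, 0 ≤ q x)
    (hsupp : CommonSupport p q) {s₀ r : ℝ} (hs₀ : s₀ ∈ Icc (0 : ℝ) 1)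
    (hmax : IsMaxOn (dC p q) (Icc 0 1) s₀) (hr : 0 < r)
    (hvar : ∑ x, tilted p q s₀ x * (log (p x) - log (q x) - dC' p q s₀) ^ 2 ≤ r ^ 2 / 2) :
    1 / 2 * exp (-dC p q s₀ - r) ≤ ∑ x, min (p x) (q x) := by
  set m := dC' p q s₀
  have hc := cherSum_pos hp hq hsupp s₀
  have hd : HasDerivAt (dC p q) m s₀ := (differentiable_dC hp hq hsupp s₀).hasDerivAt
  have hm₀ : 0 ≤ s₀ * m := by
    nlinarith [hmax.mul_sub_nonpos_of_hasDerivAt (convex_Icc 0 1) hs₀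
      (left_mem_Icc.mpr zero_le_one) hd]
  have hm₁ : (1 - s₀) * m ≤ 0 := by
    nlinarith [hmax.mul_sub_nonpos_of_hasDerivAt (convex_Icc 0 1) hs₀
      (right_mem_Icc.mpr zero_le_one) hd]
  set A := Finset.univ.filter (fun x => |log (p x) - log (q x) - m| ≤ r)
  have hcheb : 1 / 2 ≤ ∑ x ∈ A, tilted p q s₀ x :=
    one_half_le_sum_filter_abs_le (isPMF_tilted hp hq hsupp s₀) hr hvar
  calc 1 / 2 * exp (-dC p q s₀ - r) = 1 / 2 * (cherSum p q s₀ * exp (-r)) := by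
        rw [sub_eq_add_neg, exp_add, dC, neg_neg, exp_log hc]
    _ ≤ (∑ x ∈ A, tilted p q s₀ x) * (cherSum p q s₀ * exp (-r)) := by gcongr
    _ = ∑ x ∈ A, cherTerm p q s₀ x * exp (-r) := by
        rw [Finset.sum_mul]
        refine Finset.sum_congr rfl fun x _ => ?_
        rw [← mul_assoc, tilted, div_mul_cancel₀ _ hc.ne']
        rfl
    _ ≤ ∑ x ∈ A, min (p x) (q x) := Finset.sum_le_sum fun x hx =>
        cherTerm_mul_exp_neg_le_min hp hq hs₀ hm₀ hm₁ (Finset.mem_filter.mp hx).2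
    _ ≤ ∑ x, min (p x) (q x) := Finset.sum_le_sum_of_subset_of_nonneg (Finset.subset_univ A)
        fun x _ _ => le_min (hp x) (hq x)

end ChernoffBound

section Product

variable {Y : Type*} {n : ℕ}

def piDist (p : Fin n → Y → ℝ) (y : Fin n → Y) : ℝ := ∏ i, p i (y i)

theorem prodDist_eq_piDist {X : Type*} [Fintype Y] (P : X → Y → ℝ) (w : Fin n → X) :
    prodDist P w = piDist fun i => P (w i) := rfl

theorem piDist_nonneg {p : Fin n → Y → ℝ} (hp : ∀ i v, 0 ≤ p i v) (y : Fin n → Y) :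
    0 ≤ piDist p y :=
  Finset.prod_nonneg fun i _ => hp i (y i)

theorem piDist_ne_zero_iff {p : Fin n → Y → ℝ} {y : Fin n → Y} :
    piDist p y ≠ 0 ↔ ∀ i, p i (y i) ≠ 0 := by
  simp [piDist, Finset.prod_eq_zero_iff]

variable [Fintype Y]

theorem sum_piDist_mul_prod (q f : Fin n → Y → ℝ) :
    ∑ y, piDist q y * ∏ i, f i (y i) = ∏ i, ∑ v, q i v * f i v := by
  rw [Fintype.prod_sum]
  exact Finset.sum_congr rfl fun y _ => (Finset.prod_mul_distrib).symm

theorem isPMF_piDist {p : Fin n → Y → ℝ} (hp : ∀ i, IsPMF (p i)) : IsPMF (piDist p) :=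
  ⟨piDist_nonneg fun i => (hp i).1, by
    simpa [(hp _).2] using sum_piDist_mul_prod p fun _ _ => 1⟩

theorem sum_piDist_mul_apply {q : Fin n → Y → ℝ} (hq : ∀ i, ∑ v, q i v = 1) (i : Fin n)
    (g : Y → ℝ) : ∑ y, piDist q y * g (y i) = ∑ v, q i v * g v := by
  have := sum_piDist_mul_prod q fun k v => if k = i then g v else 1
  simpa [apply_ite, hq, Finset.prod_ite_eq'] using this

theorem sum_piDist_mul_apply_mul_apply {q : Fin n → Y → ℝ} {i j : Fin n} (hij : i ≠ j)
    {g : Y → ℝ} (hg : ∑ v, q i v * g v = 0) (h : Y → ℝ) :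
    ∑ y, piDist q y * (g (y i) * h (y j)) = 0 := by
  have := sum_piDist_mul_prod q fun k v => (if k = i then g v else 1) * (if k = j then h v else 1)
  simp only [Finset.prod_mul_distrib, Finset.prod_ite_eq', Finset.mem_univ, if_true] at this
  rw [this]
  refine Finset.prod_eq_zero (Finset.mem_univ i) ?_
  simpa [hij] using hg

theorem sum_piDist_mul_sum_sq {q a : Fin n → Y → ℝ} (hq : ∀ i, ∑ v, q i v = 1)
    (ha : ∀ i, ∑ v, q i v * a i v = 0) :
    ∑ y, piDist q y * (∑ i, a i (y i)) ^ 2 = ∑ i, ∑ v, q i v * a i v ^ 2 := by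
  calc ∑ y, piDist q y * (∑ i, a i (y i)) ^ 2
      = ∑ i, ∑ j, ∑ y, piDist q y * (a i (y i) * a j (y j)) := by
        simp_rw [sq, Finset.sum_mul_sum, Finset.mul_sum]
        rw [Finset.sum_comm]
        exact Finset.sum_congr rfl fun i _ => Finset.sum_comm
    _ = ∑ i, ∑ y, piDist q y * (a i (y i) * a i (y i)) := by
        refine Finset.sum_congr rfl fun i _ => Finset.sum_eq_single i (fun j _ hji => ?_) (by simp)
        rw [← Finset.sum_congr rfl fun y _ => by rw [mul_comm (a i (y i))]]
        exact sum_piDist_mul_apply_mul_apply hji (ha j) _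
    _ = ∑ i, ∑ v, q i v * a i v ^ 2 := by
        simp only [← sq]
        exact Finset.sum_congr rfl fun i _ => sum_piDist_mul_apply hq i fun v => a i v ^ 2

end Product

section ProductChernoff

open Real

variable {Y : Type*} {n : ℕ} {p q : Fin n → Y → ℝ}

theorem cherTerm_piDist (hp : ∀ i v, 0 ≤ p i v) (hq : ∀ i v, 0 ≤ q i v) (s : ℝ)
    (y : Fin n → Y) :
    cherTerm (piDist p) (piDist q) s y = ∏ i, cherTerm (p i) (q i) s (y i) := by
  by_cases h : ∀ i, p i (y i) ≠ 0 ∧ q i (y i) ≠ 0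
  · have hpy : piDist p y ≠ 0 := piDist_ne_zero_iff.mpr fun i => (h i).1
    have hqy : piDist q y ≠ 0 := piDist_ne_zero_iff.mpr fun i => (h i).2
    rw [cherTerm_eq_exp (piDist_nonneg hp) (piDist_nonneg hq) hpy hqy, piDist, piDist,
      log_prod fun i _ => (h i).1, log_prod fun i _ => (h i).2, Finset.mul_sum, Finset.mul_sum,
      ← Finset.sum_add_distrib, exp_sum]
    exact Finset.prod_congr rfl fun i _ =>
      (cherTerm_eq_exp (hp i) (hq i) (h i).1 (h i).2 s).symm
  · push Not at h
    obtain ⟨i, hi⟩ := h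
    have hzero : piDist p y = 0 ∨ piDist q y = 0 := by
      by_cases hpi : p i (y i) = 0
      · exact Or.inl (Finset.prod_eq_zero (Finset.mem_univ i) hpi)
      · exact Or.inr (Finset.prod_eq_zero (Finset.mem_univ i) (hi hpi))
    rw [cherTerm_of_eq_zero hzero, Finset.prod_eq_zero (Finset.mem_univ i)]
    exact cherTerm_of_eq_zero (by tauto) s

theorem commonSupport_piDist (hsupp : ∀ i, CommonSupport (p i) (q i)) :
    CommonSupport (piDist p) (piDist q) := by
  choose y hy using hsupp
  exact ⟨y, piDist_ne_zero_iff.mpr fun i => (hy i).1, piDist_ne_zero_iff.mpr fun i => (hy i).2⟩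

variable [Fintype Y]

theorem cherSum_piDist (hp : ∀ i v, 0 ≤ p i v) (hq : ∀ i v, 0 ≤ q i v) (s : ℝ) :
    cherSum (piDist p) (piDist q) s = ∏ i, cherSum (p i) (q i) s := by
  simp only [cherSum_eq_sum_cherTerm, cherTerm_piDist hp hq, Fintype.prod_sum]

theorem dC_piDist (hp : ∀ i v, 0 ≤ p i v) (hq : ∀ i v, 0 ≤ q i v)
    (hsupp : ∀ i, CommonSupport (p i) (q i)) (s : ℝ) :
    dC (piDist p) (piDist q) s = ∑ i, dC (p i) (q i) s := by
  rw [dC, cherSum_piDist hp hq,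
    log_prod fun i _ => (cherSum_pos (hp i) (hq i) (hsupp i) s).ne', ← Finset.sum_neg_distrib]
  rfl

theorem tilted_piDist (hp : ∀ i v, 0 ≤ p i v) (hq : ∀ i v, 0 ≤ q i v) (s : ℝ) :
    tilted (piDist p) (piDist q) s = piDist fun i => tilted (p i) (q i) s := by
  funext y
  rw [tilted, ← cherTerm, cherTerm_piDist hp hq, cherSum_piDist hp hq, piDist,
    ← Finset.prod_div_distrib]
  rfl

theorem dC'_piDist (hp : ∀ i v, 0 ≤ p i v) (hq : ∀ i v, 0 ≤ q i v)
    (hsupp : ∀ i, CommonSupport (p i) (q i)) (s : ℝ) :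
    dC' (piDist p) (piDist q) s = ∑ i, dC' (p i) (q i) s := by
  have hsum : dC (piDist p) (piDist q) = fun s => ∑ i, dC (p i) (q i) s :=
    funext (dC_piDist hp hq hsupp)
  rw [dC', hsum]
  exact (HasDerivAt.fun_sum fun i _ =>
    (differentiable_dC (hp i) (hq i) (hsupp i) s).hasDerivAt).deriv

theorem sum_tilted_piDist_mul_sq_le (hp : ∀ i, IsPMF (p i)) (hq : ∀ i, IsPMF (q i))
    (hsupp : ∀ i, CommonSupport (p i) (q i)) {L : ℝ}
    (hL : ∀ i v, p i v ≠ 0 → q i v ≠ 0 → |log (p i v) - log (q i v)| ≤ L) (s : ℝ) :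
    ∑ y, tilted (piDist p) (piDist q) s y *
        (log (piDist p y) - log (piDist q y) - dC' (piDist p) (piDist q) s) ^ 2 ≤ n * L ^ 2 := by
  have hp₀ : ∀ i v, 0 ≤ p i v := fun i => (hp i).1
  have hq₀ : ∀ i v, 0 ≤ q i v := fun i => (hq i).1
  set w := fun i => tilted (p i) (q i) s
  have hw : ∀ i, IsPMF (w i) := fun i => isPMF_tilted (hp₀ i) (hq₀ i) (hsupp i) s
  have hmean : ∀ i, dC' (p i) (q i) s = ∑ v, w i v * (log (p i v) - log (q i v)) :=
    fun i => (hasDerivAt_dC (hp₀ i) (hq₀ i) (hsupp i) s).deriv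
  set a := fun i v => log (p i v) - log (q i v) - dC' (p i) (q i) s
  have hcentred : ∀ i, ∑ v, w i v * a i v = 0 := fun i => by
    simp only [a, mul_sub, Finset.sum_sub_distrib, ← Finset.sum_mul, (hw i).2, hmean, one_mul,
      sub_self]
  have hsum : ∀ y, tilted (piDist p) (piDist q) s y *
      (log (piDist p y) - log (piDist q y) - dC' (piDist p) (piDist q) s) ^ 2 =
      piDist w y * (∑ i, a i (y i)) ^ 2 := fun y => by
    rw [tilted_piDist hp₀ hq₀]
    change piDist w y * _ = _
    by_cases hy : piDist w y = 0
    · simp [hy]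
    have hpq := fun i => ne_zero_of_tilted_ne_zero (piDist_ne_zero_iff.mp hy i)
    have hlog : log (piDist p y) - log (piDist q y) = ∑ i, (log (p i (y i)) - log (q i (y i))) := by
      rw [piDist, piDist, log_prod fun i _ => (hpq i).1, log_prod fun i _ => (hpq i).2,
        Finset.sum_sub_distrib]
    rw [hlog, dC'_piDist hp₀ hq₀ hsupp, ← Finset.sum_sub_distrib]
  calc _ = ∑ y, piDist w y * (∑ i, a i (y i)) ^ 2 := Finset.sum_congr rfl fun y _ => hsum y
    _ = ∑ i, ∑ v, w i v * a i v ^ 2 := sum_piDist_mul_sum_sq (fun i => (hw i).2) hcentred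
    _ ≤ ∑ _i : Fin n, L ^ 2 := Finset.sum_le_sum fun i _ => by
        simp only [a, hmean]
        exact sum_mul_sub_mean_sq_le (hw i) fun v hv =>
          hL i v (ne_zero_of_tilted_ne_zero hv).1 (ne_zero_of_tilted_ne_zero hv).2
    _ = n * L ^ 2 := by simp

/-- The constant `1/4` absorbs `exp (-log 2)`, which keeps the radius `√(2n) L + log 2` of the
Chebyshev window positive even when `n L = 0`. -/
theorem quarter_exp_neg_le_sum_min_piDist (hp : ∀ i, IsPMF (p i)) (hq : ∀ i, IsPMF (q i))
    (hsupp : ∀ i, CommonSupport (p i) (q i)) {L : ℝ} (hL₀ : 0 ≤ L)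
    (hL : ∀ i v, p i v ≠ 0 → q i v ≠ 0 → |log (p i v) - log (q i v)| ≤ L) {s₀ : ℝ}
    (hs₀ : s₀ ∈ Icc (0 : ℝ) 1) (hmax : IsMaxOn (dC (piDist p) (piDist q)) (Icc 0 1) s₀) :
    1 / 4 * exp (-dC (piDist p) (piDist q) s₀ - √(2 * n) * L) ≤
      ∑ y, min (piDist p y) (piDist q y) := by
  set r := √(2 * n) * L
  have hr₀ : 0 ≤ r := mul_nonneg (sqrt_nonneg _) hL₀
  have hr : 0 < r + log 2 := by linarith [log_pos one_lt_two]
  have hr2 : r ^ 2 = 2 * n * L ^ 2 := by rw [mul_pow, sq_sqrt (by positivity)]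
  have hvar := (sum_tilted_piDist_mul_sq_le hp hq hsupp hL s₀).trans
    (show (n : ℝ) * L ^ 2 ≤ (r + log 2) ^ 2 / 2 by nlinarith [log_pos one_lt_two])
  calc 1 / 4 * exp (-dC (piDist p) (piDist q) s₀ - r)
      = 1 / 2 * exp (-dC (piDist p) (piDist q) s₀ - (r + log 2)) := by
        rw [show -dC (piDist p) (piDist q) s₀ - (r + log 2) =
          -dC (piDist p) (piDist q) s₀ - r + -log 2 by ring, exp_add, exp_neg, exp_log two_pos]
        ring
    _ ≤ _ := half_exp_neg_dC_sub_le_sum_min (isPMF_piDist hp).1 (isPMF_piDist hq).1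
        (commonSupport_piDist hsupp) hs₀ hmax hr hvar

theorem exists_lt_dC_piDist (hp : ∀ i, IsPMF (p i)) (hq : ∀ i, IsPMF (q i))
    (hsupp : ∀ i, CommonSupport (p i) (q i)) {L : ℝ} (hL₀ : 0 ≤ L)
    (hL : ∀ i v, p i v ≠ 0 → q i v ≠ 0 → |log (p i v) - log (q i v)| ≤ L) {B c : ℝ}
    (hB : ∑ y, min (piDist p y) (piDist q y) ≤ B) (hc : c + √(2 * n) * L + log 4 < -log B) :
    ∃ a ∈ Icc (0 : ℝ) 1, c < dC (piDist p) (piDist q) a := by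
  obtain ⟨a, ha, hmax⟩ := isCompact_Icc.exists_isMaxOn (nonempty_Icc.mpr zero_le_one)
    (differentiable_dC (isPMF_piDist hp).1 (isPMF_piDist hq).1
      (commonSupport_piDist hsupp)).continuous.continuousOn
  refine ⟨a, ha, ?_⟩
  have hlog := log_le_log (by positivity)
    ((quarter_exp_neg_le_sum_min_piDist hp hq hsupp hL₀ hL ha hmax).trans hB)
  rw [log_mul (by norm_num) (exp_pos _).ne', log_exp, one_div, log_inv] at hlog
  linarith

end ProductChernoff

section Exceedance

open Filter Topology

variable {f g h : ℝ → ℝ} {E s σ τ : ℝ}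

def symMax (g : ℝ → ℝ) (s : ℝ) : ℝ := max (g s) (g (1 - s))

theorem exists_lt_of_lt_symMax {a : ℝ} (ha : a ∈ Icc (0 : ℝ) 1) (hlt : E < symMax g a) :
    ∃ σ ∈ Icc (0 : ℝ) 1, E < g σ ∧ (σ = a ∨ σ = 1 - a) := by
  rcases lt_max_iff.mp hlt with h | h
  · exact ⟨a, ha, h, Or.inl rfl⟩
  · exact ⟨1 - a, ⟨by linarith [ha.2], by linarith [ha.1]⟩, h, Or.inr rfl⟩

theorem ConcaveOn.comp_one_sub (hf : ConcaveOn ℝ univ f) : ConcaveOn ℝ univ fun x => f (1 - x) :=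
  ⟨convex_univ, fun x _ y _ a b ha hb hab => by
    have := hf.2 (mem_univ (1 - x)) (mem_univ (1 - y)) ha hb hab
    convert this using 2
    simp only [smul_eq_mul]
    linear_combination (-1 : ℝ) * hab⟩

theorem ConcaveOn.lt_of_mem_segment (hf : ConcaveOn ℝ univ f) {x y z : ℝ} (hx : E < f x)
    (hy : E ≤ f y) (hz : z ∈ segment ℝ x y) (hzy : z ≠ y) : E < f z := by
  obtain ⟨a, b, ha, hb, hab, rfl⟩ := hz
  have ha' : 0 < a := by
    refine ha.lt_of_ne fun h0 => hzy ?_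
    rw [← h0, zero_add] at hab
    simp [← h0, hab]
  have := hf.2 (mem_univ x) (mem_univ y) ha hb hab
  have hE : a * E + b * E = E := by rw [← add_mul, hab, one_mul]
  simp only [smul_eq_mul] at this ⊢
  nlinarith [mul_lt_mul_of_pos_left hx ha', mul_le_mul_of_nonneg_left hy hb]

theorem ConcaveOn.lt_of_lt_apply (hf : ConcaveOn ℝ univ f) {x y ρ : ℝ} (hx : E ≤ f x)
    (hy : f y ≤ E) (hxy : x < y) (hρ : E < f ρ) : ρ < y := by
  by_contra! hyρ
  have hmem : y ∈ segment ℝ ρ x := by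
    rw [segment_symm, segment_eq_Icc (hxy.le.trans hyρ)]
    exact ⟨hxy.le, hyρ⟩
  exact (hf.lt_of_mem_segment hρ hx hmem hxy.ne').not_ge hy

/-- Moving from `s` a little towards `σ` keeps `g` above `E` by continuity and pushes the
concave `h` above `E`. -/
theorem exists_lt_lt_of_continuousAt (hg : ContinuousAt g s) (hh : ConcaveOn ℝ univ h)
    (hs : s ∈ Icc (0 : ℝ) 1) (hσ : σ ∈ Icc (0 : ℝ) 1) (hgs : E < g s) (hhs : E ≤ h s)
    (hhσ : E < h σ) : ∃ u ∈ Icc (0 : ℝ) 1, E < g u ∧ E < h u := by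
  rcases eq_or_ne σ s with rfl | hσs
  · exact ⟨σ, hσ, hgs, hhσ⟩
  have hpath : Tendsto (fun t : ℝ => s + t * (σ - s)) (𝓝[>] 0) (𝓝 s) := by
    have : Continuous fun t : ℝ => s + t * (σ - s) := by fun_prop
    simpa using (this.tendsto 0).mono_left nhdsWithin_le_nhds
  obtain ⟨t, hgt, ht⟩ :=
    ((hpath.eventually (hg.eventually (lt_mem_nhds hgs))).and (Ioc_mem_nhdsGT one_pos)).exists
  have hseg : s + t * (σ - s) ∈ segment ℝ σ s :=
    ⟨t, 1 - t, ht.1.le, sub_nonneg.mpr ht.2, by ring, by simp only [smul_eq_mul]; ring⟩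
  refine ⟨_, (convex_Icc 0 1).segment_subset hσ hs hseg, hgt, hh.lt_of_mem_segment hhσ hhs hseg ?_⟩
  simpa [sub_eq_zero, ht.1.ne'] using hσs

/-- Whichever of `σ`, `τ` is closer to `s` works. -/
theorem lt_or_lt_of_mul_pos (hg : ConcaveOn ℝ univ g) (hh : ConcaveOn ℝ univ h) (hgs : E ≤ g s)
    (hhs : E ≤ h s) (hgσ : E < g σ) (hhτ : E < h τ) (hside : 0 < (σ - s) * (τ - s)) :
    E < g τ ∨ E < h σ := by
  have between : ∀ {f : ℝ → ℝ}, ConcaveOn ℝ univ f → E ≤ f s → ∀ {x z : ℝ}, E < f x →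
      (x ≤ z ∧ z < s ∨ s < z ∧ z ≤ x) → E < f z := by
    intro f hf hfs x z hfx hz
    refine hf.lt_of_mem_segment hfx hfs ?_ ?_ <;> rcases hz with hz | hz
    · exact segment_eq_uIcc x s ▸ Set.mem_uIcc.mpr (Or.inl ⟨hz.1, hz.2.le⟩)
    · exact segment_eq_uIcc x s ▸ Set.mem_uIcc.mpr (Or.inr ⟨hz.1.le, hz.2⟩)
    · exact hz.2.ne
    · exact hz.1.ne'
  rcases pos_and_pos_or_neg_and_neg_of_mul_pos hside with ⟨h1, h2⟩ | ⟨h1, h2⟩ <;>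
    rcases le_total σ τ with h3 | h3
  · exact Or.inr (between hh hhs hhτ (Or.inr ⟨by linarith, h3⟩))
  · exact Or.inl (between hg hgs hgσ (Or.inr ⟨by linarith, h3⟩))
  · exact Or.inl (between hg hgs hgσ (Or.inl ⟨h3, by linarith⟩))
  · exact Or.inr (between hh hhs hhτ (Or.inl ⟨h3, by linarith⟩))

theorem ConcaveOn.sub_le_deriv_mul (hf : ConcaveOn ℝ univ f) {x : ℝ}
    (hd : DifferentiableAt ℝ f x) (y : ℝ) : f y - f x ≤ deriv f x * (y - x) := by
  rcases lt_trichotomy y x with hyx | rfl | hxy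
  · have := hf.deriv_le_slope (mem_univ y) (mem_univ x) hyx hd
    rw [slope_def_field, le_div_iff₀ (sub_pos.mpr hyx)] at this
    linarith
  · simp
  · have := hf.slope_le_deriv (mem_univ x) (mem_univ y) hxy hd
    rw [slope_def_field, div_le_iff₀ (sub_pos.mpr hxy)] at this
    linarith

theorem deriv_mul_deriv_neg {F G : ℝ → ℝ} {t a b : ℝ} (hF : ConcaveOn ℝ univ F)
    (hG : ConcaveOn ℝ univ G) (hFd : DifferentiableAt ℝ F t) (hGd : DifferentiableAt ℝ G t)
    (hFa : F t < F a) (hGb : G t < G b) (hab : (a - t) * (b - t) < 0) :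
    deriv F t * deriv G t < 0 := by
  have h1 := hF.sub_le_deriv_mul hFd a
  have h2 := hG.sub_le_deriv_mul hGd b
  by_contra! h
  nlinarith [mul_pos (sub_pos.mpr hFa) (sub_pos.mpr hGb), mul_nonpos_of_nonneg_of_nonpos h hab.le]

variable {gp gq : ℝ → ℝ}

theorem left_eq_of_forall_not_lt (hgp : ConcaveOn ℝ univ gp) (hgq : ConcaveOn ℝ univ gq)
    (hs : s ∈ Icc (0 : ℝ) 1) (hE : E = min (gp s) (gq s))
    (hno : ∀ u ∈ Icc (0 : ℝ) 1, E < gp u → E < gq u → False) (hτ : τ ∈ Icc (0 : ℝ) 1)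
    (hgqτ : E < gq τ) : gp s = E := by
  by_contra hne
  have hgps : E < gp s := (hE.trans_le (min_le_left _ _)).lt_of_ne' hne
  have hgqs : gq s = E := by
    rcases min_choice (gp s) (gq s) with h | h <;> rw [h] at hE
    · exact absurd hE.symm hne
    · exact hE.symm
  obtain ⟨u, hu, h1, h2⟩ := exists_lt_lt_of_continuousAt
    ((continuousOn_univ.mp (hgp.continuousOn isOpen_univ)).continuousAt) hgq hs hτ hgps
    hgqs.ge hgqτ
  exact hno u hu h1 h2

/-- The sign of `(x - s) * (x - (1 - s))` tells whether `x` lies strictly inside or strictly outside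
`[s, 1 - s]`: exactly one of `σ`, `τ` is inside. By concavity neither lies beyond `1 - s`, and by
`lt_or_lt_of_mul_pos` they are on opposite sides of `s`. For `s = 1/2` reflecting `gq` about `1/2`
puts them on the same side, a contradiction. -/
theorem mul_neg_of_forall_min_symMax_le (hgp : ConcaveOn ℝ univ gp) (hgq : ConcaveOn ℝ univ gq)
    (hs : s ∈ Ioc (0 : ℝ) (1 / 2)) (hgps : gp s = E) (hgqs : gq s = E) (hgp₁ : gp (1 - s) ≤ E)
    (hgq₁ : gq (1 - s) ≤ E) (hno : ∀ u ∈ Icc (0 : ℝ) 1, min (symMax gp u) (symMax gq u) ≤ E)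
    (hσ : σ ∈ Icc (0 : ℝ) 1) (hgpσ : E < gp σ) (hτ : τ ∈ Icc (0 : ℝ) 1) (hgqτ : E < gq τ) :
    (σ - s) * (σ - (1 - s)) * ((τ - s) * (τ - (1 - s))) < 0 := by
  have hno' : ∀ u ∈ Icc (0 : ℝ) 1, E < symMax gp u → E < symMax gq u → False :=
    fun u hu h1 h2 => (hno u hu).not_gt (lt_min h1 h2)
  have hopp : (σ - s) * (τ - s) < 0 := by
    refine lt_of_le_of_ne (not_lt.mp fun hpos => ?_) (mul_ne_zero ?_ ?_)
    · rcases lt_or_lt_of_mul_pos hgp hgq hgps.ge hgqs.ge hgpσ hgqτ hpos with h | h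
      · exact hno' τ hτ (h.trans_le (le_max_left _ _)) (hgqτ.trans_le (le_max_left _ _))
      · exact hno' σ hσ (hgpσ.trans_le (le_max_left _ _)) (h.trans_le (le_max_left _ _))
    · exact sub_ne_zero.mpr fun h => by rw [h, hgps] at hgpσ; exact lt_irrefl E hgpσ
    · exact sub_ne_zero.mpr fun h => by rw [h, hgqs] at hgqτ; exact lt_irrefl E hgqτ
  rcases hs.2.lt_or_eq with hlt | rfl
  · have h1 : σ < 1 - s := hgp.lt_of_lt_apply hgps.ge hgp₁ (by linarith) hgpσ
    have h2 : τ < 1 - s := hgq.lt_of_lt_apply hgqs.ge hgq₁ (by linarith) hgqτ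
    have := mul_neg_of_neg_of_pos hopp (mul_pos_of_neg_of_neg (sub_neg.mpr h1) (sub_neg.mpr h2))
    linarith
  · exfalso
    rcases lt_or_lt_of_mul_pos hgp hgq.comp_one_sub hgps.ge (by norm_num [hgqs]) hgpσ
      (τ := 1 - τ) (by simpa using hgqτ) (by nlinarith) with h | h
    · exact hno' τ hτ (h.trans_le (le_max_right _ _)) (hgqτ.trans_le (le_max_left _ _))
    · exact hno' σ hσ (hgpσ.trans_le (le_max_left _ _)) (h.trans_le (le_max_right _ _))

/-- The points `a`, `b` where `F`, `G` exceed `k E` give points where `gp`, `gq` exceed `E`; by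
`mul_neg_of_forall_min_symMax_le` they lie on opposite sides of `s` or of `1 - s`, and there the
concave `F` and `G` have derivatives pointing towards them. -/
theorem exists_deriv_mul_deriv_neg {F G : ℝ → ℝ} {k a b : ℝ} (hgp : ConcaveOn ℝ univ gp)
    (hgq : ConcaveOn ℝ univ gq) (hF : ConcaveOn ℝ univ F) (hG : ConcaveOn ℝ univ G)
    (hFd : Differentiable ℝ F) (hGd : Differentiable ℝ G) (hs : s ∈ Ioc (0 : ℝ) (1 / 2))
    (hmax : ∀ u ∈ Icc (0 : ℝ) 1,
      min (symMax gp u) (symMax gq u) ≤ min (symMax gp s) (symMax gq s))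
    (hpord : gp (1 - s) ≤ gp s) (hqord : gq (1 - s) ≤ gq s) (hE : E = min (gp s) (gq s))
    (hk : 0 ≤ k) (hFle : ∀ u ∈ Icc (0 : ℝ) 1, F u ≤ k * symMax gp u)
    (hGle : ∀ u ∈ Icc (0 : ℝ) 1, G u ≤ k * symMax gq u) (ha : a ∈ Icc (0 : ℝ) 1)
    (hb : b ∈ Icc (0 : ℝ) 1) (hFa : k * E < F a) (hGb : k * E < G b) :
    ∃ t, (t = s ∨ t = 1 - s) ∧ deriv F t * deriv G t < 0 ∧ symMax gp t = E ∧ symMax gq t = E := by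
  have hs₁ : s ∈ Icc (0 : ℝ) 1 := ⟨hs.1.le, by linarith [hs.2]⟩
  have hno : ∀ u ∈ Icc (0 : ℝ) 1, min (symMax gp u) (symMax gq u) ≤ E := by
    simpa only [hE, symMax, max_eq_left hpord, max_eq_left hqord] using hmax
  obtain ⟨σ, hσ, hgpσ, hσa⟩ :=
    exists_lt_of_lt_symMax ha (lt_of_mul_lt_mul_left (hFa.trans_le (hFle a ha)) hk)
  obtain ⟨τ, hτ, hgqτ, hτb⟩ :=
    exists_lt_of_lt_symMax hb (lt_of_mul_lt_mul_left (hGb.trans_le (hGle b hb)) hk)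
  have hno' : ∀ u ∈ Icc (0 : ℝ) 1, E < gp u → E < gq u → False := fun u hu h1 h2 =>
    (hno u hu).not_gt (lt_min (h1.trans_le (le_max_left _ _)) (h2.trans_le (le_max_left _ _)))
  have hgps : gp s = E := left_eq_of_forall_not_lt hgp hgq hs₁ hE hno' hτ hgqτ
  have hgqs : gq s = E := left_eq_of_forall_not_lt hgq hgp hs₁ (hE.trans (min_comm _ _))
    (fun u hu h1 h2 => hno' u hu h2 h1) hσ hgpσ
  have hgp₁ : gp (1 - s) ≤ E := hpord.trans_eq hgps
  have hgq₁ : gq (1 - s) ≤ E := hqord.trans_eq hgqs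
  have hsym : ∀ t, t = s ∨ t = 1 - s → t ∈ Icc (0 : ℝ) 1 ∧ symMax gp t = E ∧ symMax gq t = E := by
    rintro t (rfl | rfl)
    · exact ⟨hs₁, by simp [symMax, hgp₁, hgq₁, hgps, hgqs]⟩
    · refine ⟨⟨by linarith [hs₁.2], by linarith [hs₁.1]⟩, ?_⟩
      simp [symMax, hgp₁, hgq₁, hgps, hgqs]
  have hopp := mul_neg_of_forall_min_symMax_le hgp hgq hs hgps hgqs hgp₁ hgq₁ hno hσ hgpσ hτ hgqτ
  have hfin : ∀ t, t = s ∨ t = 1 - s → (a - t) * (b - t) < 0 → ∃ t, (t = s ∨ t = 1 - s) ∧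
      deriv F t * deriv G t < 0 ∧ symMax gp t = E ∧ symMax gq t = E := fun t ht hab => by
    obtain ⟨htI, hgpt, hgqt⟩ := hsym t ht
    refine ⟨t, ht, deriv_mul_deriv_neg hF hG (hFd t) (hGd t) ?_ ?_ hab, hgpt, hgqt⟩
    · exact ((hFle t htI).trans_eq (by rw [hgpt])).trans_lt hFa
    · exact ((hGle t htI).trans_eq (by rw [hgqt])).trans_lt hGb
  have hsplit : (σ - s) * (σ - (1 - s)) * ((τ - s) * (τ - (1 - s))) =
      (a - s) * (b - s) * ((a - (1 - s)) * (b - (1 - s))) := by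
    rcases hσa with rfl | rfl <;> rcases hτb with rfl | rfl <;> ring
  rcases mul_neg_iff.mp (hsplit ▸ hopp) with ⟨-, h⟩ | ⟨h, -⟩
  · exact hfin (1 - s) (Or.inr rfl) h
  · exact hfin s (Or.inl rfl) h

end Exceedance

section Channel

open Real

variable {Y : Type*} [Fintype Y] {n : ℕ}

theorem IsPMF.le_one {α : Type*} [Fintype α] {p : α → ℝ} (hp : IsPMF p) (x : α) : p x ≤ 1 :=
  hp.2 ▸ Finset.single_le_sum (fun y _ => hp.1 y) (Finset.mem_univ x)

theorem IsPMF.commonSupport_self {α : Type*} [Fintype α] {p : α → ℝ} (hp : IsPMF p) :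
    CommonSupport p p := by
  obtain ⟨x, -, hx⟩ := Finset.exists_ne_zero_of_sum_ne_zero (hp.2.symm ▸ one_ne_zero)
  exact ⟨x, hx, hx⟩

theorem IsChannel.commonSupport {P : Bool → Y → ℝ} (hP : IsChannel P)
    (hsupp : CommonSupport (P false) (P true)) (b b' : Bool) : CommonSupport (P b) (P b') := by
  obtain ⟨y, h₀, h₁⟩ := hsupp
  cases b <;> cases b'
  exacts [(hP false).commonSupport_self, ⟨y, h₀, h₁⟩, ⟨y, h₁, h₀⟩, (hP true).commonSupport_self]

theorem IsChannel.prodDist_nonneg {X : Type*} {P : X → Y → ℝ} (hP : IsChannel P)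
    (w : Fin n → X) (y : Fin n → Y) : 0 ≤ prodDist P w y :=
  piDist_nonneg (fun _ => (hP _).1) y

theorem IsChannel.commonSupport_prodDist {P : Bool → Y → ℝ} (hP : IsChannel P)
    (hsupp : CommonSupport (P false) (P true)) (w w' : Fin n → Bool) :
    CommonSupport (prodDist P w) (prodDist P w') :=
  commonSupport_piDist fun _ => hP.commonSupport hsupp _ _

theorem IsChannel.concaveOn_dC_prodDist {P : Bool → Y → ℝ} (hP : IsChannel P)
    (hsupp : CommonSupport (P false) (P true)) (w w' : Fin n → Bool) :
    ConcaveOn ℝ univ (dC (prodDist P w) (prodDist P w')) :=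
  concaveOn_dC (hP.prodDist_nonneg w) (hP.prodDist_nonneg w') (hP.commonSupport_prodDist hsupp w w')

theorem IsChannel.differentiable_dC_prodDist {P : Bool → Y → ℝ} (hP : IsChannel P)
    (hsupp : CommonSupport (P false) (P true)) (w w' : Fin n → Bool) :
    Differentiable ℝ (dC (prodDist P w) (prodDist P w')) :=
  differentiable_dC (hP.prodDist_nonneg w) (hP.prodDist_nonneg w')
    (hP.commonSupport_prodDist hsupp w w')

theorem abs_log_sub_log_le {pmin a b : ℝ} (hpmin : 0 < pmin) (ha : pmin ≤ a) (ha₁ : a ≤ 1)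
    (hb : pmin ≤ b) (hb₁ : b ≤ 1) : |log a - log b| ≤ log (1 / pmin) := by
  have := log_le_log hpmin ha
  have := log_le_log hpmin hb
  have := log_nonpos (hpmin.trans_le ha).le ha₁
  have := log_nonpos (hpmin.trans_le hb).le hb₁
  rw [one_div, log_inv, abs_le]
  constructor <;> linarith

theorem exists_lt_dC_prodDist {P : Bool → Y → ℝ} (hP : IsChannel P)
    (hsupp : CommonSupport (P false) (P true)) {pmin : ℝ} (hpmin₀ : 0 < pmin)
    (hpmin : ∀ b y, P b y ≠ 0 → pmin ≤ P b y) (w w' : Fin n → Bool) {B c : ℝ}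
    (hB : ∑ y, min (prodDist P w y) (prodDist P w' y) ≤ B)
    (hc : c + √(2 * n) * log (1 / pmin) + log 4 < -log B) :
    ∃ a ∈ Icc (0 : ℝ) 1, c < dC (prodDist P w) (prodDist P w') a := by
  have hL₀ : 0 ≤ log (1 / pmin) := by
    obtain ⟨y, hy, -⟩ := hsupp
    rw [one_div, log_inv, neg_nonneg]
    exact log_nonpos hpmin₀.le ((hpmin _ y hy).trans ((hP false).le_one y))
  exact exists_lt_dC_piDist (fun _ => hP _) (fun _ => hP _)
    (fun _ => hP.commonSupport hsupp _ _) hL₀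
    (fun _ v h h' => abs_log_sub_log_le hpmin₀ (hpmin _ v h) ((hP _).le_one v) (hpmin _ v h')
      ((hP _).le_one v)) hB hc

theorem dC_le_symMax {P : Bool → Y → ℝ} (hP : IsChannel P)
    (hsupp : CommonSupport (P false) (P true)) (b b' : Bool) {s : ℝ} (hs : s ∈ Icc (0 : ℝ) 1) :
    dC (P b) (P b') s ≤ symMax (dC (P false) (P true)) s := by
  have h₀ := dC_nonneg (hP false) (hP true) hsupp hs
  cases b <;> cases b'
  · exact (dC_self (hP false) s).trans_le (h₀.trans (le_max_left _ _))
  · exact le_max_left _ _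
  · exact (dC_swap _ _ s).trans_le (le_max_right _ _)
  · exact (dC_self (hP true) s).trans_le (h₀.trans (le_max_left _ _))

theorem dC_prodDist_le_mul_symMax {P : Bool → Y → ℝ} (hP : IsChannel P)
    (hsupp : CommonSupport (P false) (P true)) (w w' : Fin n → Bool) {s : ℝ}
    (hs : s ∈ Icc (0 : ℝ) 1) :
    dC (prodDist P w) (prodDist P w') s ≤ n * symMax (dC (P false) (P true)) s := by
  rw [prodDist_eq_piDist, prodDist_eq_piDist,
    dC_piDist (fun _ => (hP _).1) (fun _ => (hP _).1) fun _ => hP.commonSupport hsupp _ _]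
  simpa using Finset.sum_le_sum fun i (_ : i ∈ Finset.univ) =>
    dC_le_symMax hP hsupp (w i) (w' i) hs

/-- Letters where `w` agrees with `w'` contribute `0`. -/
theorem dC_prodDist_le_dC_prodDist_not {P : Bool → Y → ℝ} (hP : IsChannel P)
    (hsupp : CommonSupport (P false) (P true)) (w w' : Fin n → Bool) {s : ℝ}
    (hs : s ∈ Icc (0 : ℝ) 1) :
    dC (prodDist P w) (prodDist P w') s ≤ dC (prodDist P fun i => !w' i) (prodDist P w') s := by
  simp only [prodDist_eq_piDist]
  rw [dC_piDist (fun _ => (hP _).1) (fun _ => (hP _).1) fun _ => hP.commonSupport hsupp _ _,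
    dC_piDist (fun _ => (hP _).1) (fun _ => (hP _).1) fun _ => hP.commonSupport hsupp _ _]
  refine Finset.sum_le_sum fun i _ => ?_
  rcases Bool.eq_or_eq_not (w i) (w' i) with h | h
  · rw [h, dC_self (hP _)]
    exact dC_nonneg (hP _) (hP _) (hP.commonSupport hsupp _ _) hs
  · rw [h]

end Channel

section Protocol

variable {Y Z : Type*} [Fintype Y] [Fintype Z] {n : ℕ}

theorem sum_min_le_sum_mul_add_sum_mul {α : Type*} [Fintype α] (p q δ₀ δ₁ : α → ℝ)
    (hδ₀ : ∀ x, 0 ≤ δ₀ x) (hδ₁ : ∀ x, 0 ≤ δ₁ x) (hδ : ∀ x, δ₀ x + δ₁ x = 1) :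
    ∑ x, min (p x) (q x) ≤ ∑ x, p x * δ₁ x + ∑ x, q x * δ₀ x := by
  rw [← Finset.sum_add_distrib]
  refine Finset.sum_le_sum fun x _ => ?_
  calc min (p x) (q x) = min (p x) (q x) * δ₁ x + min (p x) (q x) * δ₀ x := by
        rw [← mul_add, add_comm, hδ x, mul_one]
    _ ≤ p x * δ₁ x + q x * δ₀ x := add_le_add
        (mul_le_mul_of_nonneg_right (min_le_left _ _) (hδ₁ x))
        (mul_le_mul_of_nonneg_right (min_le_right _ _) (hδ₀ x))

theorem decProb_nonneg {Q : Bool → Z → ℝ} (hQ : IsChannel Q) (dec : (Fin n → Z) → Bool)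
    (b : Bool) (w : Fin n → Bool) : 0 ≤ decProb Q dec b w :=
  Finset.sum_nonneg fun z _ =>
    mul_nonneg (piDist_nonneg (fun _ => (hQ _).1) z) (by split <;> norm_num)

theorem decProb_add_decProb {Q : Bool → Z → ℝ} (hQ : IsChannel Q) (dec : (Fin n → Z) → Bool)
    (w : Fin n → Bool) : decProb Q dec false w + decProb Q dec true w = 1 := by
  rw [decProb, decProb, ← Finset.sum_add_distrib]
  refine (Finset.sum_congr rfl fun z _ => ?_).trans (isPMF_piDist fun i => hQ (w i)).2
  cases dec z <;> simp [prodDist_eq_piDist]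

theorem errProb_eq (P : Bool → Y → ℝ) (Q : Bool → Z → ℝ) (π : DetProtocol Y Z n) (b : Bool) :
    errProb P Q π b = ∑ y, prodDist P (π.x b) y * decProb Q π.dec (!b) (π.W y) := by
  refine Finset.sum_congr rfl fun y _ => ?_
  rw [decProb, Finset.mul_sum]
  exact Finset.sum_congr rfl fun z _ => by ring

theorem sum_min_prodDist_le_errProb (P : Bool → Y → ℝ) {Q : Bool → Z → ℝ} (hQ : IsChannel Q)
    (π : DetProtocol Y Z n) :
    ∑ y, min (prodDist P (π.x false) y) (prodDist P (π.x true) y) ≤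
      errProb P Q π false + errProb P Q π true := by
  rw [errProb_eq, errProb_eq]
  exact sum_min_le_sum_mul_add_sum_mul _ _ _ _ (fun _ => decProb_nonneg hQ _ _ _)
    (fun _ => decProb_nonneg hQ _ _ _) (fun _ => decProb_add_decProb hQ _ _)

theorem sum_min_prodDist_le_decProb (Q : Bool → Z → ℝ) (dec : (Fin n → Z) → Bool)
    (w₀ w₁ : Fin n → Bool) :
    ∑ z, min (prodDist Q w₀ z) (prodDist Q w₁ z) ≤
      decProb Q dec true w₀ + decProb Q dec false w₁ :=
  sum_min_le_sum_mul_add_sum_mul _ _ (fun z => if dec z = false then 1 else 0)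
    (fun z => if dec z = true then 1 else 0) (fun z => by split <;> norm_num)
    (fun z => by split <;> norm_num) (fun z => by cases dec z <;> norm_num)

theorem decProb_le_errProb {P : Bool → Y → ℝ} (hP : IsChannel P) (Q : Bool → Z → ℝ)
    (π : DetProtocol Y Z n) (b : Bool) {w₀ : Fin n → Bool}
    (hw₀ : ∀ w, decProb Q π.dec (!b) w₀ ≤ decProb Q π.dec (!b) w) :
    decProb Q π.dec (!b) w₀ ≤ errProb P Q π b := by
  rw [errProb_eq]
  calc decProb Q π.dec (!b) w₀ = ∑ y, prodDist P (π.x b) y * decProb Q π.dec (!b) w₀ := by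
        rw [← Finset.sum_mul, prodDist_eq_piDist, (isPMF_piDist fun _ => hP _).2, one_mul]
    _ ≤ _ := Finset.sum_le_sum fun y _ =>
        mul_le_mul_of_nonneg_left (hw₀ _) (piDist_nonneg (fun _ => (hP _).1) y)

end Protocol

theorem opp_sign_assumption_general {Y Z : Type*} [Fintype Y] [Fintype Z]
    (P : Bool → Y → ℝ) (Q : Bool → Z → ℝ)
    (hP : IsChannel P) (hQ : IsChannel Q)
    (hPsupp : CommonSupport (P false) (P true))
    (hQsupp : CommonSupport (Q false) (Q true))
    (pmin : ℝ) (hpmin : MinTransPair P Q pmin)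
    (EStar sStar : ℝ)
    (hsStar : sStar ∈ Set.Ioc (0 : ℝ) (1 / 2))
    (hmax : ∀ s ∈ Set.Icc (0 : ℝ) 1, Efun P Q s ≤ Efun P Q sStar)
    (hPord : dC (P false) (P true) (1 - sStar) ≤ dC (P false) (P true) sStar)
    (hQord : dC (Q false) (Q true) (1 - sStar) ≤ dC (Q false) (Q true) sStar)
    (hEmin : EStar = min (dC (P false) (P true) sStar) (dC (Q false) (Q true) sStar))
    {n : ℕ} (π : DetProtocol Y Z n)
    (w1 : Fin n → Bool)
    (hw1 : ∀ w : Fin n → Bool, decProb Q π.dec false w1 ≤ decProb Q π.dec false w)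
    (hperr : n * EStar + Real.sqrt (2 * n) * Real.log (1 / pmin) + Real.log 4 <
      - Real.log (errProb P Q π false + errProb P Q π true)) :
    ∃ t : ℝ, (t = sStar ∨ t = 1 - sStar) ∧
      dC' (prodDist P (π.x false)) (prodDist P (π.x true)) t *
        dC' (prodDist Q (fun i => !(w1 i))) (prodDist Q w1) t < 0 ∧
      max (dC (P false) (P true) t) (dC (P false) (P true) (1 - t)) = EStar ∧
      max (dC (Q false) (Q true) t) (dC (Q false) (Q true) (1 - t)) = EStar := by
  obtain ⟨hpmin₀, -, hpminP, hpminQ⟩ := hpmin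
  obtain ⟨w0, hw0⟩ := Finite.exists_min (decProb Q π.dec true)
  obtain ⟨a, ha, hFa⟩ := exists_lt_dC_prodDist hP hPsupp hpmin₀ hpminP (π.x false) (π.x true)
    (sum_min_prodDist_le_errProb P hQ π) hperr
  obtain ⟨b, hb, hDb⟩ := exists_lt_dC_prodDist hQ hQsupp hpmin₀ hpminQ w0 w1
    ((sum_min_prodDist_le_decProb Q π.dec w0 w1).trans
      (add_le_add (decProb_le_errProb hP Q π false hw0) (decProb_le_errProb hP Q π true hw1)))
    hperr
  exact exists_deriv_mul_deriv_neg (concaveOn_dC (hP false).1 (hP true).1 hPsupp)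
    (concaveOn_dC (hQ false).1 (hQ true).1 hQsupp)
    (hP.concaveOn_dC_prodDist hPsupp _ _) (hQ.concaveOn_dC_prodDist hQsupp _ _)
    (hP.differentiable_dC_prodDist hPsupp _ _) (hQ.differentiable_dC_prodDist hQsupp _ _)
    hsStar hmax hPord hQord hEmin n.cast_nonneg
    (fun u hu => dC_prodDist_le_mul_symMax hP hPsupp _ _ hu)
    (fun u hu => dC_prodDist_le_mul_symMax hQ hQsupp _ _ hu) ha hb hFa
    (hDb.trans_le (dC_prodDist_le_dC_prodDist_not hQ hQsupp w0 w1 hb))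

/-- Lemma 2 of the paper / `lem:opp_assump`. -/
theorem opp_sign_assumption {Y Z : Type*} [Fintype Y] [Fintype Z]
    (P : Bool → Y → ℝ) (Q : Bool → Z → ℝ)
    (hP : IsChannel P) (hQ : IsChannel Q)
    (hPsupp : CommonSupport (P false) (P true))
    (hQsupp : CommonSupport (Q false) (Q true))
    (hPnc : NonConstantOn (fun s => dC (P false) (P true) s))
    (hQnc : NonConstantOn (fun s => dC (Q false) (Q true) s))
    (pmin : ℝ) (hpmin : MinTransPair P Q pmin)
    (EStar sStar : ℝ)
    (hsStar : sStar ∈ Set.Ioc (0 : ℝ) (1 / 2))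
    (hmax : ∀ s ∈ Set.Icc (0 : ℝ) 1, Efun P Q s ≤ Efun P Q sStar)
    (hEStar : EStar = sSup ((fun s : ℝ => Efun P Q s) '' Set.Icc 0 1))
    (hPord : dC (P false) (P true) (1 - sStar) ≤ dC (P false) (P true) sStar)
    (hQord : dC (Q false) (Q true) (1 - sStar) ≤ dC (Q false) (Q true) sStar)
    (hEmin : EStar = min (dC (P false) (P true) sStar) (dC (Q false) (Q true) sStar))
    {n : ℕ} (π : DetProtocol Y Z n)
    (w1 : Fin n → Bool)
    (hw1 : ∀ w : Fin n → Bool, decProb Q π.dec false w1 ≤ decProb Q π.dec false w)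
    (hperr : n * EStar + Real.sqrt (2 * n) * Real.log (1 / pmin) + Real.log 4 <
      - Real.log (errProb P Q π false + errProb P Q π true)) :
    ∃ t : ℝ, (t = sStar ∨ t = 1 - sStar) ∧
      dC' (prodDist P (π.x false)) (prodDist P (π.x true)) t *
        dC' (prodDist Q (fun i => !(w1 i))) (prodDist Q w1) t < 0 ∧
      max (dC (P false) (P true) t) (dC (P false) (P true) (1 - t)) = EStar ∧
      max (dC (Q false) (Q true) t) (dC (Q false) (Q true) (1 - t)) = EStar :=
  opp_sign_assumption_general P Q hP hQ hPsupp hQsupp pmin hpmin EStar sStar hsStar hmax hPord hQord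
    hEmin π w1 hw1 hperr
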